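/- arXiv:2501.16528 — 7 statements merged into one kernel-verified Lean document; each statement's English description precedes it below -/
import Mathlib

section
/- In a frame L, if a family {x_i}_{i∈I} is co-discrete, witnessed by a cover C (⋁C = 1) such that for each c ∈ C we have c ≤ x_i for all i with at most one exception, then for every y ∈ L: y ∨ ⋀_{i∈I} x_i = ⋀_{i∈I} (y ∨ x_i). -/
/-- In a frame `L`, if a family `x : I → L` is co-discrete, witnessed by a cover `C`
(`⋁ C = ⊤`) such that each `c ∈ C` satisfies `c ≤ x i` for all `i` with at most one
exception, then for every `y : L`, `y ⊔ ⨅ i, x i = ⨅ i, (y ⊔ x i)`. -/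
theorem stmt7 {L : Type*} [Order.Frame L] {I : Type*} (x : I → L)
    (C : Set L) (hC : sSup C = ⊤)
    (hcod : ∀ c ∈ C, {i : I | ¬ c ≤ x i}.Subsingleton) (y : L) :
    y ⊔ ⨅ i, x i = ⨅ i, (y ⊔ x i) := by
  refine le_antisymm (le_iInf fun i => sup_le_sup_left (iInf_le _ i) _) ?_
  set z := ⨅ i, (y ⊔ x i) with hz
  have key : ∀ c ∈ C, z ⊓ c ≤ y ⊔ ⨅ i, x i := by
    intro c hc
    by_cases h : ∃ j, ¬ c ≤ x j
    · obtain ⟨j, hj⟩ := h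
      have h1 : z ⊓ c ≤ y ⊔ (z ⊓ c ⊓ x j) := by
        have : z ⊓ c ≤ (y ⊔ x j) ⊓ (z ⊓ c) :=
          le_inf (le_trans inf_le_left (iInf_le _ j)) le_rfl
        refine this.trans ?_
        rw [inf_sup_right]
        exact sup_le_sup inf_le_left (by rw [inf_comm])
      refine h1.trans (sup_le_sup_left (le_iInf fun i => ?_) _)
      rcases eq_or_ne i j with rfl | hne
      · exact inf_le_right
      · have hci : c ≤ x i := by
          by_contra hcn
          exact hne (hcod c hc hcn hj)
        exact le_trans (le_trans inf_le_left inf_le_right) hci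
    · push_neg at h
      exact le_trans inf_le_right (le_sup_of_le_right (le_iInf h))
  calc z = z ⊓ sSup C := by rw [hC, inf_top_eq]
    _ = ⨆ c ∈ C, z ⊓ c := by rw [inf_sSup_eq]
    _ ≤ y ⊔ ⨅ i, x i := by
        refine iSup_le fun c => iSup_le fun hc => key c hc
end

section
/- Let L and M be Boolean frames, Φ : C(L) → C(M) a lattice isomorphism with Φ(0) = 0 between their lattices of continuous real functions. Then the map φ : L → M given by φ(a) = Φ(χ_a)(0,—) (where χ_a is the characteristic function of the complemented element a) is a Boolean algebra isomorphism. In particular, if C(L) and C(M) are isomorphic Riesz spaces then L ≅ M. -/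
/-- A continuous real function on a frame `L`: a frame homomorphism `𝔏(ℝ) → L`, determined
by its values `pos p = f(p,—)` and `neg q = f(—,q)` on generators, turning the defining
relations (r1)–(r6) of the frame of reals into identities in `L`. -/
structure RealFn (L : Type*) [Order.Frame L] where
  pos : ℚ → L
  neg : ℚ → L
  r1 : ∀ p q : ℚ, q ≤ p → pos p ⊓ neg q = ⊥
  r2 : ∀ p q : ℚ, p < q → pos p ⊔ neg q = ⊤
  r3 : ∀ p : ℚ, pos p = ⨆ q > p, pos q
  r4 : ∀ q : ℚ, neg q = ⨆ p < q, neg p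
  r5 : ⨆ p : ℚ, pos p = ⊤
  r6 : ⨆ q : ℚ, neg q = ⊤

/-- The partial order of `C(L)`: `f ≤ g` iff `f(p,—) ≤ g(p,—)` for all rationals `p`. -/
def RealFn.le {L : Type*} [Order.Frame L] (f g : RealFn L) : Prop :=
  ∀ p : ℚ, f.pos p ≤ g.pos p

namespace S10

variable {N : Type*} [Order.Frame N]

lemma ext' {f g : RealFn N} (h1 : f.pos = g.pos) (h2 : f.neg = g.neg) : f = g := by
  cases f; cases g; cases h1; cases h2; rfl

lemma pos_anti (f : RealFn N) : Antitone f.pos := by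
  intro p q hpq
  rcases eq_or_lt_of_le hpq with rfl | h
  · exact le_rfl
  · rw [f.r3 p]
    exact le_iSup₂ (f := fun r (_ : r > p) => f.pos r) q h

lemma neg_mono (f : RealFn N) : Monotone f.neg := by
  intro p q hpq
  rcases eq_or_lt_of_le hpq with rfl | h
  · exact le_rfl
  · rw [f.r4 q]
    exact le_iSup₂ (f := fun r (_ : r < q) => f.neg r) p h

lemma compl_le_of {b x : N} (hb : b ⊔ bᶜ = ⊤) (hx : x ⊓ bᶜ = ⊥) : x ≤ b := by
  have h : x = x ⊓ (b ⊔ bᶜ) := by rw [hb, inf_top_eq]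
  rw [h, inf_sup_left, hx, sup_bot_eq]
  exact inf_le_right

/-- The underlying `pos` function of a characteristic function. -/
def chipos (a : N) (r : ℚ) : N := if 1 ≤ r then ⊥ else if 0 ≤ r then a else ⊤

/-- The underlying `neg` function of a characteristic function. -/
def chineg (a : N) (s : ℚ) : N := if 1 < s then ⊤ else if 0 < s then aᶜ else ⊥

lemma chipos_anti (a : N) : Antitone (chipos a) := by
  intro p q h
  unfold chipos
  split_ifs <;> first | (exfalso; linarith) | exact le_rfl | simp

/-- The characteristic function of a complemented element of a frame. -/
def chiFn (hN : ∀ b : N, b ⊔ bᶜ = ⊤) (a : N) : RealFn N where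
  pos := chipos a
  neg := chineg a
  r1 p q hqp := by
    unfold chipos chineg
    split_ifs <;>
      first
        | (exfalso; linarith)
        | exact disjoint_compl_right.eq_bot
        | simp
  r2 p q hpq := by
    unfold chipos chineg
    split_ifs <;>
      first
        | (exfalso; linarith)
        | exact hN a
        | simp
  r3 p := by
    apply le_antisymm
    · rcases le_or_gt 1 p with h1 | h1
      · simp [chipos, h1]
      · rcases le_or_gt 0 p with h0 | h0
        · have hv : chipos a ((p + 1) / 2) = a := by
            unfold chipos
            rw [if_neg (by linarith), if_pos (by linarith)]
          have hlhs : chipos a p = a := by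
            unfold chipos
            rw [if_neg (by linarith), if_pos h0]
          calc chipos a p = chipos a ((p + 1) / 2) := by rw [hlhs, hv]
            _ ≤ _ := le_iSup₂ (f := fun r (_ : r > p) => chipos a r) ((p + 1) / 2)
              (by rw [gt_iff_lt]; linarith)
        · have hv : chipos a (p / 2) = ⊤ := by
            unfold chipos
            rw [if_neg (by linarith), if_neg (by linarith)]
          calc chipos a p ≤ ⊤ := le_top
            _ = chipos a (p / 2) := hv.symm
            _ ≤ _ := le_iSup₂ (f := fun r (_ : r > p) => chipos a r) (p / 2)
              (by rw [gt_iff_lt]; linarith)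
    · exact iSup₂_le fun q hq => chipos_anti a hq.le
  r4 q := by
    apply le_antisymm
    · rcases le_or_gt q 0 with h0 | h0
      · simp [chineg, not_lt.2 h0, not_lt.2 (h0.trans (by norm_num : (0:ℚ) ≤ 1))]
      · rcases le_or_gt q 1 with h1 | h1
        · have hv : chineg a (q / 2) = aᶜ := by
            unfold chineg
            rw [if_neg (by linarith), if_pos (by linarith)]
          have hlhs : chineg a q = aᶜ := by
            unfold chineg
            rw [if_neg (by linarith), if_pos h0]
          calc chineg a q = chineg a (q / 2) := by rw [hlhs, hv]
            _ ≤ _ := le_iSup₂ (f := fun r (_ : r < q) => chineg a r) (q / 2) (by linarith)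
        · have hv : chineg a ((q + 1) / 2) = ⊤ := by
            unfold chineg
            rw [if_pos (by linarith)]
          calc chineg a q ≤ ⊤ := le_top
            _ = chineg a ((q + 1) / 2) := hv.symm
            _ ≤ _ := le_iSup₂ (f := fun r (_ : r < q) => chineg a r) ((q + 1) / 2)
              (by linarith)
    · refine iSup₂_le fun p hp => ?_
      unfold chineg
      split_ifs <;> first | (exfalso; linarith) | exact le_rfl | simp
  r5 := by
    rw [eq_top_iff]
    have hv : chipos a (-1) = ⊤ := by
      unfold chipos
      rw [if_neg (by norm_num), if_neg (by norm_num)]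
    rw [← hv]
    exact le_iSup (chipos a) (-1)
  r6 := by
    rw [eq_top_iff]
    have hv : chineg a 2 = ⊤ := by
      unfold chineg
      rw [if_pos (by norm_num)]
    rw [← hv]
    exact le_iSup (chineg a) 2

lemma chiFn_pos_zero (hN : ∀ b : N, b ⊔ bᶜ = ⊤) (a : N) : (chiFn hN a).pos 0 = a := by
  show chipos a 0 = a
  unfold chipos
  rw [if_neg (by norm_num), if_pos le_rfl]

lemma le_chiFn (hN : ∀ b : N, b ⊔ bᶜ = ⊤) (z : RealFn N)
    (hz : ∀ p : ℚ, z.pos p = if p < 0 then ⊤ else ⊥) (a : N) :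
    RealFn.le z (chiFn hN a) := by
  intro p
  rw [hz]
  show _ ≤ chipos a p
  unfold chipos
  split_ifs <;> first | exact bot_le | (exfalso; linarith) | exact le_rfl

/-- Pointwise meet of two real functions which are `≥ 0`. -/
def meetFn (f g : RealFn N) (hf : f.pos (-1) = ⊤) (hg : g.pos (-1) = ⊤) : RealFn N where
  pos p := f.pos p ⊓ g.pos p
  neg q := f.neg q ⊔ g.neg q
  r1 p q h := by
    rw [inf_sup_left, le_bot_iff.symm]
    apply sup_le
    · calc f.pos p ⊓ g.pos p ⊓ f.neg q ≤ f.pos p ⊓ f.neg q :=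
            inf_le_inf_right _ inf_le_left
        _ = ⊥ := f.r1 p q h
    · calc f.pos p ⊓ g.pos p ⊓ g.neg q ≤ g.pos p ⊓ g.neg q :=
            inf_le_inf_right _ inf_le_right
        _ = ⊥ := g.r1 p q h
  r2 p q h := by
    rw [sup_inf_right, eq_top_iff]
    apply le_inf
    · calc (⊤ : N) = f.pos p ⊔ f.neg q := (f.r2 p q h).symm
        _ ≤ f.pos p ⊔ (f.neg q ⊔ g.neg q) := sup_le_sup_left le_sup_left _
    · calc (⊤ : N) = g.pos p ⊔ g.neg q := (g.r2 p q h).symm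
        _ ≤ g.pos p ⊔ (f.neg q ⊔ g.neg q) := sup_le_sup_left le_sup_right _
  r3 p := by
    apply le_antisymm
    · calc f.pos p ⊓ g.pos p = (⨆ q > p, f.pos q) ⊓ g.pos p := by rw [← f.r3]
        _ = ⨆ q > p, (f.pos q ⊓ g.pos p) := by
            rw [iSup_inf_eq]
            refine iSup_congr fun q => ?_
            rw [iSup_inf_eq]
        _ ≤ ⨆ q > p, (f.pos q ⊓ g.pos q) := by
            refine iSup₂_le fun q hq => ?_
            calc f.pos q ⊓ g.pos p = f.pos q ⊓ ⨆ q' > p, g.pos q' := by rw [← g.r3]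
              _ = ⨆ q' > p, (f.pos q ⊓ g.pos q') := by
                  rw [inf_iSup_eq]
                  refine iSup_congr fun q' => ?_
                  rw [inf_iSup_eq]
              _ ≤ _ := by
                  refine iSup₂_le fun q' hq' => ?_
                  refine le_trans (inf_le_inf (pos_anti f (min_le_left q q'))
                    (pos_anti g (min_le_right q q'))) ?_
                  exact le_iSup₂ (f := fun r (_ : r > p) => f.pos r ⊓ g.pos r)
                    (min q q') (lt_min hq hq')
    · exact iSup₂_le fun q hq => inf_le_inf (pos_anti f hq.le) (pos_anti g hq.le)
  r4 q := by
    apply le_antisymm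
    · apply sup_le
      · rw [f.r4 q]
        exact iSup₂_le fun p hp =>
          le_trans le_sup_left
            (le_iSup₂ (f := fun r (_ : r < q) => f.neg r ⊔ g.neg r) p hp)
      · rw [g.r4 q]
        exact iSup₂_le fun p hp =>
          le_trans le_sup_right
            (le_iSup₂ (f := fun r (_ : r < q) => f.neg r ⊔ g.neg r) p hp)
    · exact iSup₂_le fun p hp => sup_le_sup (neg_mono f hp.le) (neg_mono g hp.le)
  r5 := by
    rw [eq_top_iff]
    calc (⊤ : N) = f.pos (-1) ⊓ g.pos (-1) := by rw [hf, hg, inf_top_eq]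
      _ ≤ _ := le_iSup (fun p => f.pos p ⊓ g.pos p) (-1)
  r6 := by
    rw [eq_top_iff, ← f.r6]
    exact iSup_le fun q => le_trans le_sup_left (le_iSup (fun r => f.neg r ⊔ g.neg r) q)

/-- Order-theoretic disjointness relative to `z`. -/
def Disj (z f g : RealFn N) : Prop :=
  ∀ h : RealFn N, RealFn.le h f → RealFn.le h g → RealFn.le h z

lemma disj_iff (z f g : RealFn N)
    (hz : ∀ p : ℚ, z.pos p = if p < 0 then ⊤ else ⊥)
    (hf : RealFn.le z f) (hg : RealFn.le z g) :
    Disj z f g ↔ f.pos 0 ⊓ g.pos 0 = ⊥ := by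
  constructor
  · intro hd
    have hf1 : f.pos (-1) = ⊤ := by
      have := hf (-1)
      rw [hz, if_pos (by norm_num)] at this
      exact top_le_iff.1 this
    have hg1 : g.pos (-1) = ⊤ := by
      have := hg (-1)
      rw [hz, if_pos (by norm_num)] at this
      exact top_le_iff.1 this
    have h0 := hd (meetFn f g hf1 hg1) (fun p => inf_le_left) (fun p => inf_le_right) 0
    rw [hz, if_neg (lt_irrefl 0)] at h0
    exact le_bot_iff.1 h0
  · intro hb h h1 h2 p
    rw [hz]
    split_ifs with hp
    · exact le_top
    · have hle : h.pos p ≤ f.pos 0 ⊓ g.pos 0 :=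
        le_inf ((h1 p).trans (pos_anti f (not_lt.1 hp)))
          ((h2 p).trans (pos_anti g (not_lt.1 hp)))
      rwa [hb] at hle

lemma coz_le_iff (hN : ∀ b : N, b ⊔ bᶜ = ⊤) (z : RealFn N)
    (hz : ∀ p : ℚ, z.pos p = if p < 0 then ⊤ else ⊥)
    (f h : RealFn N) (hf : RealFn.le z f) (hh : RealFn.le z h) :
    f.pos 0 ≤ h.pos 0 ↔ ∀ g, RealFn.le z g → Disj z g h → Disj z g f := by
  constructor
  · intro hle g hg hd
    rw [disj_iff z g h hz hg hh] at hd
    rw [disj_iff z g f hz hg hf]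
    exact le_bot_iff.1 (le_trans (inf_le_inf_left _ hle) hd.le)
  · intro H
    have hg : RealFn.le z (chiFn hN ((h.pos 0)ᶜ)) := le_chiFn hN z hz _
    have hd : Disj z (chiFn hN ((h.pos 0)ᶜ)) h := by
      rw [disj_iff z _ h hz hg hh, chiFn_pos_zero]
      exact disjoint_compl_left.eq_bot
    have hdf := H _ hg hd
    rw [disj_iff z _ f hz hg hf, chiFn_pos_zero] at hdf
    exact compl_le_of (hN (h.pos 0)) (by rwa [inf_comm] at hdf)

end S10

/-- Let `L`, `M` be Boolean frames and `Φ : C(L) → C(M)` a lattice isomorphism (here: an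
order isomorphism, which is the same thing for lattices) with `Φ(𝟎) = 𝟎`.  Given the
characteristic functions `χ_a ∈ C(L)` of elements `a ∈ L` (specified on generators by
`χ_a(r,—) = ⊥` if `r ≥ 1`, `= a` if `0 ≤ r < 1`, `= ⊤` if `r < 0`, and `χ_a(—,s) = ⊤` if
`s > 1`, `= aᶜ` if `0 < s ≤ 1`, `= ⊥` if `s ≤ 0`), the map `φ : L → M`,
`φ(a) = Φ(χ_a)(0,—)`, is a Boolean algebra isomorphism: a bijection preserving `⊥`, `⊤`,
binary meets and binary joins.  In particular `L ≅ M`. -/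
theorem stmt10 {L M : Type*} [Order.Frame L] [Order.Frame M]
    (hL : ∀ a : L, a ⊔ aᶜ = ⊤) (hM : ∀ b : M, b ⊔ bᶜ = ⊤)
    (Φ : RealFn L ≃ RealFn M)
    (hΦ : ∀ f g : RealFn L, RealFn.le f g ↔ RealFn.le (Φ f) (Φ g))
    (zL : RealFn L) (zM : RealFn M)
    (hzLpos : ∀ p : ℚ, zL.pos p = if p < 0 then ⊤ else ⊥)
    (hzLneg : ∀ q : ℚ, zL.neg q = if 0 < q then ⊤ else ⊥)
    (hzMpos : ∀ p : ℚ, zM.pos p = if p < 0 then ⊤ else ⊥)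
    (hzMneg : ∀ q : ℚ, zM.neg q = if 0 < q then ⊤ else ⊥)
    (hΦ0 : Φ zL = zM)
    (chi : L → RealFn L)
    (hchipos : ∀ (a : L) (r : ℚ),
      (chi a).pos r = if 1 ≤ r then ⊥ else if 0 ≤ r then a else ⊤)
    (hchineg : ∀ (a : L) (s : ℚ),
      (chi a).neg s = if 1 < s then ⊤ else if 0 < s then aᶜ else ⊥) :
    Function.Bijective (fun a : L => (Φ (chi a)).pos 0) ∧
    (Φ (chi ⊥)).pos 0 = ⊥ ∧ (Φ (chi ⊤)).pos 0 = ⊤ ∧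
    (∀ a b : L, (Φ (chi (a ⊓ b))).pos 0 = (Φ (chi a)).pos 0 ⊓ (Φ (chi b)).pos 0) ∧
    (∀ a b : L, (Φ (chi (a ⊔ b))).pos 0 = (Φ (chi a)).pos 0 ⊔ (Φ (chi b)).pos 0) := by
  classical
  set φ : L → M := fun a => (Φ (chi a)).pos 0 with hφdef
  -- positivity of the characteristic functions
  have hposL : ∀ a : L, RealFn.le zL (chi a) := by
    intro a p
    rw [hzLpos, hchipos]
    split_ifs <;> first | exact bot_le | (exfalso; linarith) | exact le_rfl
  -- transport of positivity across Φ
  have hposM : ∀ f : RealFn L, RealFn.le zL f ↔ RealFn.le zM (Φ f) := by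
    intro f
    rw [← hΦ0]
    exact hΦ zL f
  -- transport of disjointness across Φ
  have hDisjT : ∀ f g : RealFn L, S10.Disj zL f g ↔ S10.Disj zM (Φ f) (Φ g) := by
    intro f g
    constructor
    · intro hd h' h1 h2
      have h1' : RealFn.le (Φ.symm h') f := by
        rw [hΦ, Φ.apply_symm_apply]; exact h1
      have h2' : RealFn.le (Φ.symm h') g := by
        rw [hΦ, Φ.apply_symm_apply]; exact h2
      have h3 := hd _ h1' h2'
      rw [hΦ, Φ.apply_symm_apply, hΦ0] at h3
      exact h3
    · intro hd h h1 h2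
      have h3 := hd (Φ h) ((hΦ _ _).1 h1) ((hΦ _ _).1 h2)
      rw [← hΦ0, ← hΦ] at h3
      exact h3
  -- the master lemma
  have hmaster : ∀ f h : RealFn L, RealFn.le zL f → RealFn.le zL h →
      (f.pos 0 ≤ h.pos 0 ↔ (Φ f).pos 0 ≤ (Φ h).pos 0) := by
    intro f h hf hh
    rw [S10.coz_le_iff hL zL hzLpos f h hf hh,
        S10.coz_le_iff hM zM hzMpos (Φ f) (Φ h) ((hposM f).1 hf) ((hposM h).1 hh)]
    constructor
    · intro H g' hg' hd'
      have h1 : RealFn.le zL (Φ.symm g') := by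
        rw [hposM, Φ.apply_symm_apply]; exact hg'
      have h2 : S10.Disj zL (Φ.symm g') h := by
        rw [hDisjT, Φ.apply_symm_apply]; exact hd'
      have h3 := H _ h1 h2
      rwa [hDisjT, Φ.apply_symm_apply] at h3
    · intro H g hg hd
      exact (hDisjT g f).2 (H (Φ g) ((hposM g).1 hg) ((hDisjT g h).1 hd))
  have hchipos0 : ∀ a : L, (chi a).pos 0 = a := by
    intro a
    rw [hchipos]
    norm_num
  -- φ is an order embedding
  have hkey : ∀ a b : L, a ≤ b ↔ φ a ≤ φ b := by
    intro a b
    have h := hmaster (chi a) (chi b) (hposL a) (hposL b)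
    rwa [hchipos0, hchipos0] at h
  -- φ is surjective
  have hsurj : ∀ b : M, ∃ a : L, φ a = b := by
    intro b
    set f := Φ.symm (S10.chiFn hM b) with hfdef
    have hfz : RealFn.le zL f := by
      rw [hposM, Φ.apply_symm_apply]
      exact S10.le_chiFn hM zM hzMpos b
    refine ⟨f.pos 0, ?_⟩
    have h1 : φ (f.pos 0) ≤ (Φ f).pos 0 := by
      rw [hφdef]
      rw [← hmaster _ _ (hposL _) hfz, hchipos0]
    have h2 : (Φ f).pos 0 ≤ φ (f.pos 0) := by
      rw [hφdef]
      rw [← hmaster _ _ hfz (hposL _), hchipos0]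
    have h3 : (Φ f).pos 0 = b := by
      rw [hfdef, Φ.apply_symm_apply]
      exact S10.chiFn_pos_zero hM b
    rw [← h3]
    exact le_antisymm h1 h2
  have hinj : Function.Injective φ := fun a b hab =>
    le_antisymm ((hkey a b).2 hab.le) ((hkey b a).2 hab.ge)
  have hbot : φ ⊥ = ⊥ := by
    have hzb : chi ⊥ = zL := by
      refine S10.ext' (funext fun p => ?_) (funext fun s => ?_)
      · rw [hchipos, hzLpos]
        split_ifs <;> first | rfl | (exfalso; linarith)
      · rw [hchineg, hzLneg]
        split_ifs <;> first | rfl | simp | (exfalso; linarith)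
    show (Φ (chi ⊥)).pos 0 = ⊥
    rw [hzb, hΦ0, hzMpos]
    norm_num
  have htop : φ ⊤ = ⊤ := by
    obtain ⟨a0, ha0⟩ := hsurj ⊤
    exact le_antisymm le_top (ha0 ▸ (hkey a0 ⊤).1 le_top)
  have hinf : ∀ a b : L, φ (a ⊓ b) = φ a ⊓ φ b := by
    intro a b
    obtain ⟨c, hc⟩ := hsurj (φ a ⊓ φ b)
    apply le_antisymm
    · exact le_inf ((hkey _ _).1 inf_le_left) ((hkey _ _).1 inf_le_right)
    · rw [← hc]
      exact (hkey c (a ⊓ b)).1 (le_inf ((hkey c a).2 (hc.le.trans inf_le_left))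
        ((hkey c b).2 (hc.le.trans inf_le_right)))
  have hsup : ∀ a b : L, φ (a ⊔ b) = φ a ⊔ φ b := by
    intro a b
    obtain ⟨c, hc⟩ := hsurj (φ a ⊔ φ b)
    apply le_antisymm
    · rw [← hc]
      exact (hkey (a ⊔ b) c).1 (sup_le ((hkey a c).2 (le_sup_left.trans hc.ge))
        ((hkey b c).2 (le_sup_right.trans hc.ge)))
    · exact sup_le ((hkey _ _).1 le_sup_left) ((hkey _ _).1 le_sup_right)
  exact ⟨⟨hinj, fun b => hsurj b⟩, hbot, htop, hinf, hsup⟩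
end

section
/- For any frame L and any continuous real function f : 𝔏(ℝ) → L, one has f(p,—) = ⋁_{r>p} f(r,—)** for every rational p, where ** denotes double pseudocomplement in L. -/
/-- For any frame `L` and any continuous real function `f` on `L`,
`f(p,—) = ⋁_{r>p} f(r,—)ᶜᶜ` for every rational `p`. -/
theorem stmt11 {L : Type*} [Order.Frame L] (f : RealFn L) (p : ℚ) :
    f.pos p = ⨆ r > p, (f.pos r)ᶜᶜ := by
  apply le_antisymm
  · rw [f.r3 p]
    exact iSup_mono fun r => iSup_mono fun _ => le_compl_compl
  · refine iSup_le fun r => iSup_le fun hr => ?_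
    obtain ⟨q, hpq, hqr⟩ := exists_rat_btwn hr
    have h2 : f.pos p ⊔ f.neg q = ⊤ := f.r2 p q hpq
    have h1 : f.pos r ⊓ f.neg q = ⊥ := f.r1 r q hqr.le
    have hc : f.neg q ≤ (f.pos r)ᶜ := by
      rw [le_compl_iff_disjoint_left, disjoint_iff]
      exact h1
    calc (f.pos r)ᶜᶜ = (f.pos r)ᶜᶜ ⊓ (f.pos p ⊔ f.neg q) := by rw [h2, inf_top_eq]
      _ = (f.pos r)ᶜᶜ ⊓ f.pos p ⊔ (f.pos r)ᶜᶜ ⊓ f.neg q := inf_sup_left _ _ _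
      _ ≤ f.pos p ⊔ ⊥ := by
          refine sup_le_sup inf_le_right ?_
          calc (f.pos r)ᶜᶜ ⊓ f.neg q ≤ (f.pos r)ᶜᶜ ⊓ (f.pos r)ᶜ :=
                inf_le_inf_left _ hc
            _ = ⊥ := by simp
      _ = f.pos p := sup_bot_eq _
end

section
/- Let L be a frame and σ : ℚ → L an extended scale (σ(q) ≺ σ(p) whenever p < q, where b ≺ a means b* ∨ a = 1). Then the assignments f(p,—) = ⋁_{r>p} σ(r) and f(—,q) = ⋁_{r<q} σ(r)* turn the defining relations (r1), (r3), (r4) of the frame of reals into identities in L; moreover they also turn (r5) and (r6) into identities (so that f defines a continuous real function) if and only if ⋁_{p∈ℚ} σ(p) = 1 = ⋁_{p∈ℚ} σ(p)*. -/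
/-- Let `L` be a frame and `σ : ℚ → L` an extended scale, i.e. `σ q ≺ σ p` whenever
`p < q` (where `b ≺ a` means `bᶜ ⊔ a = ⊤`).  Then the assignments
`f(p,—) = ⋁_{r>p} σ r` and `f(—,q) = ⋁_{r<q} (σ r)ᶜ` turn the defining relations
(r1), (r3), (r4) of the frame of reals into identities in `L`; moreover they also turn
(r5) and (r6) into identities (so `f` defines a continuous real function) if and only if
`⋁_p σ p = ⊤ = ⋁_p (σ p)ᶜ`. -/
theorem stmt12 {L : Type*} [Order.Frame L] (σ : ℚ → L)
    (hσ : ∀ p q : ℚ, p < q → (σ q)ᶜ ⊔ σ p = ⊤) :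
    (∀ p q : ℚ, q ≤ p → (⨆ r > p, σ r) ⊓ (⨆ r < q, (σ r)ᶜ) = ⊥) ∧
    (∀ p : ℚ, (⨆ r > p, σ r) = ⨆ q > p, ⨆ r > q, σ r) ∧
    (∀ q : ℚ, (⨆ r < q, (σ r)ᶜ) = ⨆ p < q, ⨆ r < p, (σ r)ᶜ) ∧
    (((⨆ p : ℚ, ⨆ r > p, σ r) = ⊤ ∧ (⨆ q : ℚ, ⨆ r < q, (σ r)ᶜ) = ⊤) ↔
      ((⨆ p : ℚ, σ p) = ⊤ ∧ (⨆ p : ℚ, (σ p)ᶜ) = ⊤)) := by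
  have mono : ∀ s r : ℚ, s < r → σ r ≤ σ s := by
    intro s r h
    have h1 := hσ s r h
    calc σ r = σ r ⊓ ((σ r)ᶜ ⊔ σ s) := by rw [h1, inf_top_eq]
      _ = (σ r ⊓ (σ r)ᶜ) ⊔ (σ r ⊓ σ s) := inf_sup_left _ _ _
      _ ≤ σ s := by simp
  refine ⟨?_, ?_, ?_, ?_⟩
  · intro p q hqp
    apply le_bot_iff.mp
    simp only [iSup_inf_eq, inf_iSup_eq]
    apply iSup_le; intro s; apply iSup_le; intro hsq
    apply iSup_le; intro r; apply iSup_le; intro hrp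
    have hle : σ r ≤ σ s := mono s r (lt_of_lt_of_le hsq (hqp.trans hrp.le))
    calc σ r ⊓ (σ s)ᶜ ≤ σ s ⊓ (σ s)ᶜ := inf_le_inf_right _ hle
      _ = ⊥ := by simp
  · intro p
    apply le_antisymm
    · apply iSup₂_le; intro r hr
      obtain ⟨q, hpq, hqr⟩ := exists_between hr
      exact le_trans (le_iSup₂ (f := fun r (_ : r > q) => σ r) r hqr)
        (le_iSup₂ (f := fun q (_ : q > p) => ⨆ r > q, σ r) q hpq)
    · apply iSup₂_le; intro q hq
      apply iSup₂_le; intro r hr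
      exact le_iSup₂ (f := fun r (_ : r > p) => σ r) r (hq.trans hr)
  · intro q
    apply le_antisymm
    · apply iSup₂_le; intro r hr
      obtain ⟨p, hrp, hpq⟩ := exists_between hr
      exact le_trans (le_iSup₂ (f := fun r (_ : r < p) => (σ r)ᶜ) r hrp)
        (le_iSup₂ (f := fun p (_ : p < q) => ⨆ r < p, (σ r)ᶜ) p hpq)
    · apply iSup₂_le; intro p hp
      apply iSup₂_le; intro r hr
      exact le_iSup₂ (f := fun r (_ : r < q) => (σ r)ᶜ) r (hr.trans hp)
  · have e1 : (⨆ p : ℚ, ⨆ r > p, σ r) = ⨆ p : ℚ, σ p := by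
      apply le_antisymm
      · apply iSup_le; intro p; apply iSup₂_le; intro r _
        exact le_iSup σ r
      · apply iSup_le; intro p
        exact le_trans (le_iSup₂ (f := fun r (_ : r > p - 1) => σ r) p (by linarith))
          (le_iSup (fun q => ⨆ r > q, σ r) (p - 1))
    have e2 : (⨆ q : ℚ, ⨆ r < q, (σ r)ᶜ) = ⨆ p : ℚ, (σ p)ᶜ := by
      apply le_antisymm
      · apply iSup_le; intro q; apply iSup₂_le; intro r _
        exact le_iSup (fun p => (σ p)ᶜ) r
      · apply iSup_le; intro p
        exact le_trans (le_iSup₂ (f := fun r (_ : r < p + 1) => (σ r)ᶜ) p (by linarith))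
          (le_iSup (fun q => ⨆ r < q, (σ r)ᶜ) (p + 1))
    rw [e1, e2]
end

section
/- Let L be a frame and f : 𝔏(ℝ) → L a frame homomorphism such that f(p,—)* ≤ f(—,q) and f(—,q)* ≤ f(p,—) for all rationals p < q (Hausdorff continuity). Then f(r,—)** ≤ f(p,—) for all rationals p < r, and hence f(p,—) = ⋁_{r>p} f(r,—)**. -/
/-- A continuous extended partial real function on a frame `L`: a frame homomorphism
`𝔏(𝕀ℝ̄) → L`, determined by its values on the generators `(p,—)` and `(—,q)`, turning the
defining relations (r1), (r3), (r4) into identities in `L`. -/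
structure PartialRealFn (L : Type*) [Order.Frame L] where
  pos : ℚ → L
  neg : ℚ → L
  r1 : ∀ p q : ℚ, q ≤ p → pos p ⊓ neg q = ⊥
  r3 : ∀ p : ℚ, pos p = ⨆ q > p, pos q
  r4 : ∀ q : ℚ, neg q = ⨆ p < q, neg p

/-- Let `f` be a continuous extended partial real function on a frame `L` that is Hausdorff
continuous, i.e. `f(p,—)ᶜ ≤ f(—,q)` and `f(—,q)ᶜ ≤ f(p,—)` for all rationals `p < q`.
Then `f(r,—)ᶜᶜ ≤ f(p,—)` for all rationals `p < r`, and hence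
`f(p,—) = ⋁_{r>p} f(r,—)ᶜᶜ`. -/
theorem stmt14 {L : Type*} [Order.Frame L] (f : PartialRealFn L)
    (hH1 : ∀ p q : ℚ, p < q → (f.pos p)ᶜ ≤ f.neg q)
    (hH2 : ∀ p q : ℚ, p < q → (f.neg q)ᶜ ≤ f.pos p) :
    (∀ p r : ℚ, p < r → (f.pos r)ᶜᶜ ≤ f.pos p) ∧
    (∀ p : ℚ, f.pos p = ⨆ r > p, (f.pos r)ᶜᶜ) := by
  have key : ∀ p r : ℚ, p < r → (f.pos r)ᶜᶜ ≤ f.pos p := by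
    intro p r hpr
    obtain ⟨q, hpq, hqr⟩ := exists_rat_btwn hpr
    have h1 : f.neg q ≤ (f.pos r)ᶜ := by
      rw [le_compl_iff_disjoint_left, disjoint_iff]
      exact f.r1 r q hqr.le
    calc (f.pos r)ᶜᶜ ≤ (f.neg q)ᶜ := compl_le_compl h1
      _ ≤ f.pos p := hH2 p q hpq
  refine ⟨key, fun p => le_antisymm ?_ ?_⟩
  · rw [f.r3 p]
    exact iSup_le fun r => iSup_le fun hr => le_trans le_compl_compl
      (le_iSup_of_le r (le_iSup_of_le hr le_rfl))
  · exact iSup_le fun r => iSup_le fun hr => key p r hr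
end

section
/- Let L be a frame and f a homomorphism from the frame of extended partial reals into L (i.e., an assignment of elements f(p,—), f(—,q) ∈ L for p,q ∈ ℚ satisfying (r1), (r3), (r4)). Then the condition 'f(p,—)* ≤ f(—,q) for all p < q' holds if and only if f is maximal in its (—,·)-part: for every such homomorphism g with f(p,—) ≤ g(p,—) and f(—,q) ≤ g(—,q) for all p,q, one has f(—,q) = g(—,q) for all q. -/
lemma PartialRealFn.pos_anti {L : Type*} [Order.Frame L] (f : PartialRealFn L)
    {p r : ℚ} (h : p < r) : f.pos r ≤ f.pos p := by
  rw [f.r3 p]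
  exact le_iSup₂_of_le r h le_rfl

lemma PartialRealFn.neg_mono {L : Type*} [Order.Frame L] (f : PartialRealFn L)
    {t s : ℚ} (h : t < s) : f.neg t ≤ f.neg s := by
  rw [f.r4 s]
  exact le_iSup₂_of_le t h le_rfl

/-- For a continuous extended partial real function `f` on a frame `L`, the condition
`f(p,—)ᶜ ≤ f(—,q)` for all `p < q` holds if and only if `f` is maximal in its `(—,·)`-part:
for every such function `g` with `f ⊑ g` (i.e. `f(p,—) ≤ g(p,—)` and `f(—,q) ≤ g(—,q)` for
all `p, q`), one has `f(—,q) = g(—,q)` for all `q`. -/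
theorem stmt15 {L : Type*} [Order.Frame L] (f : PartialRealFn L) :
    (∀ p q : ℚ, p < q → (f.pos p)ᶜ ≤ f.neg q) ↔
    (∀ g : PartialRealFn L, (∀ p : ℚ, f.pos p ≤ g.pos p) →
      (∀ q : ℚ, f.neg q ≤ g.neg q) → ∀ q : ℚ, f.neg q = g.neg q) := by
  constructor
  · intro h g hpos hneg q
    refine le_antisymm (hneg q) ?_
    rw [g.r4 q]
    refine iSup₂_le fun p hp => ?_
    obtain ⟨r, hpr, hrq⟩ := exists_between hp
    have h1 : g.neg p ≤ (g.pos r)ᶜ := by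
      rw [le_compl_iff_disjoint_left]
      exact disjoint_iff.mpr (g.r1 r p hpr.le)
    calc g.neg p ≤ (g.pos r)ᶜ := h1
      _ ≤ (f.pos r)ᶜ := compl_le_compl (hpos r)
      _ ≤ f.neg q := h r q hrq
  · intro h p q hpq
    set d := (f.pos p)ᶜ with hd
    have hr1 : ∀ r s : ℚ, s ≤ r →
        f.pos r ⊓ (if p < s then f.neg s ⊔ d else f.neg s) = ⊥ := by
      intro r s hsr
      split_ifs with hps
      · rw [inf_sup_left, f.r1 r s hsr, bot_sup_eq]
        have : f.pos r ≤ f.pos p := f.pos_anti (lt_of_lt_of_le hps hsr)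
        rw [hd, ← le_bot_iff]
        calc f.pos r ⊓ (f.pos p)ᶜ ≤ f.pos p ⊓ (f.pos p)ᶜ := inf_le_inf_right _ this
          _ = ⊥ := by simp
      · exact f.r1 r s hsr
    have hr4 : ∀ s : ℚ, (if p < s then f.neg s ⊔ d else f.neg s) =
        ⨆ t < s, (if p < t then f.neg t ⊔ d else f.neg t) := by
      intro s
      apply le_antisymm
      · split_ifs with hps
        · refine sup_le ?_ ?_
          · rw [f.r4 s]
            refine iSup₂_le fun t ht => ?_
            refine le_trans ?_ (le_iSup₂_of_le t ht le_rfl)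
            split_ifs <;> simp
          · obtain ⟨t, hpt, hts⟩ := exists_between hps
            refine le_trans ?_ (le_iSup₂_of_le t hts le_rfl)
            rw [if_pos hpt]
            exact le_sup_right
        · rw [f.r4 s] at *
          refine iSup₂_le fun t ht => ?_
          refine le_trans ?_ (le_iSup₂_of_le t ht le_rfl)
          split_ifs <;> simp
      · refine iSup₂_le fun t ht => ?_
        split_ifs with hpt hps hps
        · exact sup_le_sup_right (f.neg_mono ht) d
        · exact absurd (lt_trans hpt ht) hps
        · exact le_sup_of_le_left (f.neg_mono ht)
        · exact f.neg_mono ht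
    let g : PartialRealFn L :=
      { pos := f.pos
        neg := fun s => if p < s then f.neg s ⊔ d else f.neg s
        r1 := hr1
        r3 := f.r3
        r4 := hr4 }
    have hgneg : ∀ s : ℚ, f.neg s ≤ g.neg s := by
      intro s
      show f.neg s ≤ if p < s then f.neg s ⊔ d else f.neg s
      split_ifs <;> simp
    have := h g (fun _ => le_rfl) hgneg q
    have hq : g.neg q = f.neg q ⊔ d := by
      show (if p < q then f.neg q ⊔ d else f.neg q) = _
      rw [if_pos hpq]
    rw [hq] at this
    exact sup_eq_left.mp this.symm
end

section
/- For a frame L and a complemented pair a, b ∈ L with a ∧ b = 0, the partial real function χ_{a,b} (defined by χ_{a,b}(r,—) = 0 for r ≥ 1, = a for 0 ≤ r < 1, = 1 for r < 0; and χ_{a,b}(—,s) = 1 for s > 1, = b for 0 < s ≤ 1, = 0 for s ≤ 0) is Hausdorff continuous (i.e., satisfies χ(p,—)* ≤ χ(—,q) and χ(—,q)* ≤ χ(p,—) for all p < q) if and only if a = b* and b = a*; and it satisfies relation (r2) ((p,—) ∨ (—,q) = 1 for p < q) if and only if a ∨ b = 1. -/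
/-- For a frame `L` and `a, b ∈ L` with `a ⊓ b = ⊥`, consider the partial real function
`χ_{a,b}` given on generators by `χ(r,—) = ⊥` if `r ≥ 1`, `= a` if `0 ≤ r < 1`, `= ⊤` if
`r < 0`, and `χ(—,s) = ⊤` if `s > 1`, `= b` if `0 < s ≤ 1`, `= ⊥` if `s ≤ 0`.  Then
`χ_{a,b}` is Hausdorff continuous (i.e. `χ(p,—)ᶜ ≤ χ(—,q)` and `χ(—,q)ᶜ ≤ χ(p,—)` for all
`p < q`) iff `a = bᶜ` and `b = aᶜ`; and it satisfies relation (r2)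
(`χ(p,—) ⊔ χ(—,q) = ⊤` for `p < q`) iff `a ⊔ b = ⊤`. -/
theorem stmt16 {L : Type*} [Order.Frame L] (a b : L) (hab : a ⊓ b = ⊥)
    (pos neg : ℚ → L)
    (hpos : ∀ r : ℚ, pos r = if 1 ≤ r then ⊥ else if 0 ≤ r then a else ⊤)
    (hneg : ∀ s : ℚ, neg s = if 1 < s then ⊤ else if 0 < s then b else ⊥) :
    ((∀ p q : ℚ, p < q → (pos p)ᶜ ≤ neg q ∧ (neg q)ᶜ ≤ pos p) ↔ (a = bᶜ ∧ b = aᶜ)) ∧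
    ((∀ p q : ℚ, p < q → pos p ⊔ neg q = ⊤) ↔ a ⊔ b = ⊤) := by
  have hd : Disjoint a b := disjoint_iff.2 hab
  have hab' : a ≤ bᶜ := le_compl_iff_disjoint_right.2 hd
  have hba : b ≤ aᶜ := le_compl_iff_disjoint_left.2 hd
  constructor
  · constructor
    · intro h
      have h01 := h 0 1 (by norm_num)
      rw [hpos 0, hneg 1] at h01
      norm_num at h01
      exact ⟨le_antisymm hab' h01.2, le_antisymm hba h01.1⟩
    · rintro ⟨ha, hb⟩ p q hpq
      rw [hpos p, hneg q]
      split_ifs <;>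
        first
        | (exfalso; linarith)
        | (constructor <;> first | exact le_top | exact hb.ge | exact ha.ge | simp)
  · constructor
    · intro h
      have h01 := h 0 1 (by norm_num)
      rw [hpos 0, hneg 1] at h01
      norm_num at h01
      exact h01
    · intro h p q hpq
      rw [hpos p, hneg q]
      split_ifs <;> first | (exfalso; linarith) | simp [h]
end
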